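/- A full set of triplets ℛ on a label set 𝒳 is compatible if and only if for every set of four labels {a, b, c, d} ⊆ 𝒳, ℛ contains neither the subset {ab|c, cd|b, bd|a} nor the subset {ab|c, cd|b, ad|b}. -/

import Mathlib

/-!
Common framework: rooted binary trees with leaves bijectively labeled by a
finite label set, leaf removal, restriction, the leaf-removal distance `d_LR`,
compatibility, leaf-disagreements, triplets, LPR moves, etc.
-/

universe u

/-- A rooted binary tree whose leaves carry labels from `α`. -/
inductive LTree (α : Type u) : Type u where
  | leaf : α → LTree α
  | node : LTree α → LTree α → LTree α

namespace LTree

variable {α : Type u} [DecidableEq α]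

/-- The set of leaf labels of a tree. -/
def labels : LTree α → Finset α
  | leaf a => {a}
  | node l r => labels l ∪ labels r

/-- A tree is `Good` when its leaves carry pairwise distinct labels
(i.e. the leaves are bijectively labeled). -/
def Good : LTree α → Prop
  | leaf _ => True
  | node l r => Good l ∧ Good r ∧ Disjoint (labels l) (labels r)

/-- `T` is a (rooted binary, uniquely leaf-labeled) tree on label set `𝒳`. -/
def IsTreeOn (T : LTree α) (𝒳 : Finset α) : Prop :=
  Good T ∧ labels T = 𝒳

/-- Equality of rooted trees: children of a node are unordered. -/
inductive Iso : LTree α → LTree α → Prop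
  | leaf (a : α) : Iso (leaf a) (leaf a)
  | node {l₁ r₁ l₂ r₂ : LTree α} :
      Iso l₁ l₂ → Iso r₁ r₂ → Iso (node l₁ r₁) (node l₂ r₂)
  | swap {l₁ r₁ l₂ r₂ : LTree α} :
      Iso l₁ r₂ → Iso r₁ l₂ → Iso (node l₁ r₁) (node l₂ r₂)

/-- Equality of possibly empty trees (`none` is the empty tree). -/
def OptIso : Option (LTree α) → Option (LTree α) → Prop
  | none, none => True
  | some t₁, some t₂ => Iso t₁ t₂
  | _, _ => False

/-- Restriction `T|_S`: keep exactly the leaves with labels in `S`, suppressing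
the resulting degree-two vertices and degree-one roots; the result is `none`
when no leaf survives. -/
def restrict : LTree α → Finset α → Option (LTree α)
  | leaf a, S => if a ∈ S then some (leaf a) else none
  | node l r, S =>
    match restrict l S, restrict r S with
    | some l', some r' => some (node l' r')
    | some l', none => some l'
    | none, some r' => some r'
    | none, none => none

/-- `T − X`: remove from `T` every leaf whose label lies in `X`. -/
def remove (T : LTree α) (X : Finset α) : Option (LTree α) :=
  restrict T (labels T \ X)

/-- The leaf-removal distance `d_LR(T₁,T₂)`: the minimum number of labels
whose removal makes the two trees equal. -/
noncomputable def dLR (T₁ T₂ : LTree α) : ℕ :=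
  sInf {n | ∃ X : Finset α, X ⊆ labels T₁ ∪ labels T₂ ∧ X.card = n ∧
    OptIso (remove T₁ X) (remove T₂ X)}

def labelsO : Option (LTree α) → Finset α
  | none => ∅
  | some t => labels t

def GoodO : Option (LTree α) → Prop
  | none => True
  | some t => Good t

def restrictO : Option (LTree α) → Finset α → Option (LTree α)
  | none, _ => none
  | some t, S => restrict t S

/-- A family of (possibly empty) trees is compatible if there is a single tree,
on the union of their label sets, which displays all of them. -/
def CompatibleFamO {ι : Type*} (f : ι → Option (LTree α)) : Prop :=
  ∃ TO : Option (LTree α), GoodO TO ∧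
    (↑(labelsO TO) : Set α) = (⋃ i, ↑(labelsO (f i))) ∧
    ∀ i, OptIso (restrictO TO (labelsO (f i))) (f i)

/-- A family of trees is compatible if a single tree displays all of them. -/
def CompatibleFam {ι : Type*} (𝒯 : ι → LTree α) : Prop :=
  CompatibleFamO fun i => some (𝒯 i)

/-- `X` is a leaf-disagreement for the family `𝒯`: removing `X i` from `𝒯 i`
yields a compatible family. -/
def IsLeafDisagreement {ι : Type*} (𝒯 : ι → LTree α) (X : ι → Finset α) : Prop :=
  CompatibleFamO fun i => remove (𝒯 i) (X i)

/-- `X'` is a label-disagreement for the family `𝒯`. -/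
def IsLabelDisagreement {ι : Type*} (𝒯 : ι → LTree α) (X' : Finset α) : Prop :=
  CompatibleFamO fun i => remove (𝒯 i) X'

/-- `MASTRL 𝒯`: the minimum size of a leaf-disagreement for `𝒯`. -/
noncomputable def MASTRL {t : ℕ} (𝒯 : Fin t → LTree α) : ℕ :=
  sInf {v | ∃ X : Fin t → Finset α, (∀ i, X i ⊆ labels (𝒯 i)) ∧
    (∑ i, (X i).card) = v ∧ IsLeafDisagreement 𝒯 X}

/-- The triplet `ab|c` (as a tree). -/
def tripletTree (a b c : α) : LTree α := node (node (leaf a) (leaf b)) (leaf c)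

/-- A rooted triplet: a tree with exactly three (distinctly labeled) leaves. -/
def IsTriplet (R : LTree α) : Prop := Good R ∧ (labels R).card = 3

/-- `ab|c` is a triplet of `T`, i.e. `T|_{a,b,c} = ab|c`. -/
def IsTripletOf (T : LTree α) (a b c : α) : Prop :=
  OptIso (restrict T {a, b, c}) (some (tripletTree a b c))

/-- `tr(T)`: the triplet decomposition of `T`. -/
def trSet (T : LTree α) : Set (LTree α) :=
  {R | ∃ a b c : α, R = tripletTree a b c ∧ IsTripletOf T a b c}

/-- A set of trees is compatible: some tree on the union of the label sets
displays every member. -/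
def CompatibleSet (S : Set (LTree α)) : Prop :=
  ∃ TO : Option (LTree α), GoodO TO ∧
    (↑(labelsO TO) : Set α) = (⋃ R ∈ S, ↑(labels R)) ∧
    ∀ R ∈ S, OptIso (restrictO TO (labels R)) (some R)

/-- `MINRTI ℛ`: the minimum number of triplets to delete from `ℛ` so that the
remaining triplets are compatible. -/
noncomputable def MINRTI {t : ℕ} (R : Fin t → LTree α) : ℕ :=
  sInf {m | ∃ s : Finset (Fin t), s.card = m ∧
    CompatibleFam (fun i : {i : Fin t // i ∉ s} => R i.1)}

/-- Graft the leaf `x` at the position (edge) addressed by `p` in `T`.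
The empty address grafts `x` above the root of `T` (the `⊥` case); the address
of an internal/leaf vertex `v` grafts `x` on the edge between `v` and its
parent.  `none` when the address is invalid. -/
def graftAt (x : α) : LTree α → List Bool → Option (LTree α)
  | T, [] => some (node (leaf x) T)
  | leaf _, _ :: _ => none
  | node l r, b :: p =>
    if b then (graftAt x l p).map (fun l' => node l' r)
    else (graftAt x r p).map (fun r' => node l r')

/-- `T'` is obtained from `T` by a single LPR (leaf prune-and-regraft) move on
the leaf `x`: prune `x` from `T` and regraft it, either on an edge of
`T − {x}` or above its root. -/
def LPRStep (x : α) (T T' : LTree α) : Prop :=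
  (remove T {x} = none ∧ T' = leaf x) ∨
  ∃ T₀ p, remove T {x} = some T₀ ∧ graftAt x T₀ p = some T'

/-- `TurnsInto L T T'`: the LPR sequence with (ordered) leaf list `L` turns
`T` into `T'`. -/
inductive TurnsInto : List α → LTree α → LTree α → Prop
  | nil {T T' : LTree α} : Iso T T' → TurnsInto [] T T'
  | cons {x : α} {xs : List α} {T T'' T' : LTree α} :
      LPRStep x T T'' → TurnsInto xs T'' T' → TurnsInto (x :: xs) T T'

/-- `confset(T₁,T₂)`: the collection of 3-label sets `{a,b,c}` such that
`T₁` contains a triplet on `{a,b,c}` conflicting with a triplet of `T₂`. -/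
def confset (T₁ T₂ : LTree α) : Set (Finset α) :=
  {s | ∃ a b c : α, s = {a, b, c} ∧ IsTripletOf T₁ a b c ∧
    (IsTripletOf T₂ a c b ∨ IsTripletOf T₂ b c a)}

/-- `X` is a minimal disagreement between `T₁` and `T₂`. -/
def MinimalDisagreement (T₁ T₂ : LTree α) (X : Finset α) : Prop :=
  X ⊆ labels T₁ ∪ labels T₂ ∧
  OptIso (remove T₁ X) (remove T₂ X) ∧
  ∀ X' ⊂ X, ¬ OptIso (remove T₁ X') (remove T₂ X')

/-- `u` is (the rooted subtree hanging at) a node of `T`. -/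
inductive IsSubtree : LTree α → LTree α → Prop
  | refl (T : LTree α) : IsSubtree T T
  | left {u l r : LTree α} : IsSubtree u l → IsSubtree u (node l r)
  | right {u l r : LTree α} : IsSubtree u r → IsSubtree u (node l r)

/-- `u` is the least common ancestor in `T` of the labels in `Z`. -/
def IsLCA (T : LTree α) (Z : Finset α) (u : LTree α) : Prop :=
  IsSubtree u T ∧ Z ⊆ labels u ∧
    ∀ w, IsSubtree w T → Z ⊆ labels w → IsSubtree u w

end LTree

open LTree

/-- `R` (with `R a b c` meaning "the triplet `ab|c` belongs to `ℛ`") is a full set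
of triplets on `𝒳`: it is symmetric in the first two arguments, supported on
distinct labels of `𝒳`, and contains exactly one triplet on each 3-subset of `𝒳`. -/
def FullTriplets {α : Type u} [DecidableEq α] (𝒳 : Finset α)
    (R : α → α → α → Prop) : Prop :=
  (∀ a b c, R a b c ↔ R b a c) ∧
  (∀ a b c, R a b c → a ∈ 𝒳 ∧ b ∈ 𝒳 ∧ c ∈ 𝒳 ∧ a ≠ b ∧ a ≠ c ∧ b ≠ c) ∧
  (∀ a b c, a ∈ 𝒳 → b ∈ 𝒳 → c ∈ 𝒳 → a ≠ b → a ≠ c → b ≠ c →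
    (R a b c ∧ ¬ R a c b ∧ ¬ R b c a) ∨
    (¬ R a b c ∧ R a c b ∧ ¬ R b c a) ∨
    (¬ R a b c ∧ ¬ R a c b ∧ R b c a))

/-- The set of triplets `R` is compatible: some tree on `𝒳` displays all of them. -/
def TripletsCompatible {α : Type u} [DecidableEq α] (𝒳 : Finset α)
    (R : α → α → α → Prop) : Prop :=
  ∃ T : LTree α, IsTreeOn T 𝒳 ∧ ∀ a b c, R a b c → IsTripletOf T a b c

/-!
Displayed triplets obey the rule `ab|c, cd|b ⟹ ab|d`, which excludes both quartets.
Conversely, the quartet condition makes `ℛ` itself obey this rule. Build the tree by inserting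
the labels one at a time: at a node with sides `l` and `r`, the new label `x` goes into `l` if
`px|q ∈ ℛ` for some `p ∈ l`, `q ∈ r` (the rule then gives it for all such `p`, `q`), into `r` in
the mirror case, and above the node otherwise (then `pq|x ∈ ℛ` for all `p ≠ q` below it).
Every triplet of the resulting tree lies in `ℛ`, and as `ℛ` is full, the tree displays `ℛ`.
-/

namespace LTree

variable {α : Type u}

theorem Iso.refl : ∀ t : LTree α, Iso t t
  | .leaf a => .leaf a
  | .node l r => .node (Iso.refl l) (Iso.refl r)

theorem Iso.symm {s t : LTree α} (h : Iso s t) : Iso t s := by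
  induction h with
  | leaf a => exact .leaf a
  | node _ _ ih₁ ih₂ => exact .node ih₁ ih₂
  | swap _ _ ih₁ ih₂ => exact .swap ih₂ ih₁

theorem Iso.trans {s t v : LTree α} (h₁ : Iso s t) (h₂ : Iso t v) : Iso s v := by
  induction h₁ generalizing v with
  | leaf => exact h₂
  | node _ _ ih₁ ih₂ =>
    cases h₂ with
    | node g₁ g₂ => exact .node (ih₁ g₁) (ih₂ g₂)
    | swap g₁ g₂ => exact .swap (ih₁ g₁) (ih₂ g₂)
  | swap _ _ ih₁ ih₂ =>
    cases h₂ with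
    | node g₁ g₂ => exact .swap (ih₁ g₂) (ih₂ g₁)
    | swap g₁ g₂ => exact .node (ih₁ g₂) (ih₂ g₁)

theorem iso_node_comm (l r : LTree α) : Iso (node l r) (node r l) :=
  .swap (.refl l) (.refl r)

variable [DecidableEq α]

theorem Iso.labels_eq {s t : LTree α} (h : Iso s t) : labels s = labels t := by
  induction h with
  | leaf => rfl
  | node _ _ ih₁ ih₂ => simp only [labels, ih₁, ih₂]
  | swap _ _ ih₁ ih₂ => simp only [labels, ih₁, ih₂, Finset.union_comm]

theorem Iso.good {s t : LTree α} (h : Iso s t) (hs : Good s) : Good t := by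
  induction h with
  | leaf => trivial
  | node h₁ h₂ ih₁ ih₂ =>
    exact ⟨ih₁ hs.1, ih₂ hs.2.1, h₁.labels_eq ▸ h₂.labels_eq ▸ hs.2.2⟩
  | swap h₁ h₂ ih₁ ih₂ =>
    exact ⟨ih₂ hs.2.1, ih₁ hs.1, h₁.labels_eq ▸ h₂.labels_eq ▸ hs.2.2.symm⟩

theorem labels_nonempty : ∀ t : LTree α, (labels t).Nonempty
  | .leaf a => ⟨a, Finset.mem_singleton_self a⟩
  | .node l _ => (labels_nonempty l).mono Finset.subset_union_left

theorem eq_leaf_of_labels_eq_singleton {t : LTree α} {a : α} (ht : Good t)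
    (h : labels t = {a}) : t = leaf a := by
  cases t with
  | leaf b => simpa [labels] using h
  | node l r =>
    obtain ⟨-, -, hdisj⟩ := ht
    obtain ⟨x, hx⟩ := labels_nonempty l
    obtain ⟨y, hy⟩ := labels_nonempty r
    rw [Finset.disjoint_left] at hdisj
    simp only [labels, Finset.ext_iff, Finset.mem_union, Finset.mem_singleton] at h
    grind

theorem iso_of_labels_eq_pair {t : LTree α} {a b : α} (ht : Good t)
    (h : labels t = {a, b}) (hab : a ≠ b) : Iso t (node (leaf a) (leaf b)) := by
  cases t with
  | leaf c =>
    simp only [labels, Finset.ext_iff, Finset.mem_insert, Finset.mem_singleton] at h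
    exact absurd (((h a).mpr (.inl rfl)).trans ((h b).mpr (.inr rfl)).symm) hab
  | node l r =>
    obtain ⟨hgl, hgr, hdisj⟩ := ht
    rw [labels] at h
    obtain ⟨x, hx⟩ := labels_nonempty l
    obtain ⟨y, hy⟩ := labels_nonempty r
    have key : labels l = {a} ∧ labels r = {b} ∨ labels l = {b} ∧ labels r = {a} := by
      rw [Finset.disjoint_left] at hdisj
      simp only [Finset.ext_iff, Finset.mem_union, Finset.mem_insert,
        Finset.mem_singleton] at h ⊢
      grind
    rcases key with ⟨hl, hr⟩ | ⟨hl, hr⟩ <;>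
      rw [eq_leaf_of_labels_eq_singleton hgl hl, eq_leaf_of_labels_eq_singleton hgr hr]
    exacts [Iso.refl _, iso_node_comm _ _]

section Restrict

variable {t w : LTree α} {S : Finset α}

theorem labelsO_restrict (t : LTree α) (S : Finset α) :
    labelsO (restrict t S) = labels t ∩ S := by
  induction t with
  | leaf a => by_cases ha : a ∈ S <;> simp [restrict, ha, labelsO, labels]
  | node l r ihl ihr =>
    rw [restrict, labels, Finset.union_inter_distrib_right, ← ihl, ← ihr]
    rcases restrict l S with _ | wl <;> rcases restrict r S with _ | wr <;>
      simp [labelsO, labels]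

theorem labels_eq_of_restrict_eq_some (h : restrict t S = some w) :
    labels w = labels t ∩ S := by
  simpa only [h, labelsO] using labelsO_restrict t S

theorem restrict_eq_none_of_disjoint (h : Disjoint (labels t) S) : restrict t S = none := by
  cases hw : restrict t S with
  | none => rfl
  | some w =>
    have hne := labels_eq_of_restrict_eq_some hw ▸ labels_nonempty w
    exact absurd (Finset.disjoint_iff_inter_eq_empty.mp h) hne.ne_empty

theorem exists_restrict_eq_some (h : (labels t ∩ S).Nonempty) :
    ∃ w, restrict t S = some w ∧ labels w = labels t ∩ S := by
  cases hw : restrict t S with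
  | none => simp [← labelsO_restrict t S, hw, labelsO] at h
  | some w => exact ⟨w, rfl, labels_eq_of_restrict_eq_some hw⟩

theorem Good.restrict (ht : Good t) (h : restrict t S = some w) : Good w := by
  induction t generalizing w with
  | leaf a => by_cases ha : a ∈ S <;> simp_all [LTree.restrict]
  | node l r ihl ihr =>
    obtain ⟨hgl, hgr, hdisj⟩ := ht
    rw [LTree.restrict] at h
    rcases hl : LTree.restrict l S with _ | wl <;> rcases hr : LTree.restrict r S with _ | wr <;>
      simp only [hl, hr, reduceCtorEq, Option.some.injEq] at h <;> subst h
    · exact ihr hgr hr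
    · exact ihl hgl hl
    · refine ⟨ihl hgl hl, ihr hgr hr, ?_⟩
      rw [labels_eq_of_restrict_eq_some hl, labels_eq_of_restrict_eq_some hr]
      exact hdisj.mono Finset.inter_subset_left Finset.inter_subset_left

end Restrict

section Triplet

variable {T l r : LTree α} {a b c : α}

theorem isTripletOf_iff :
    IsTripletOf T a b c ↔ ∃ w, restrict T {a, b, c} = some w ∧ Iso w (tripletTree a b c) := by
  unfold IsTripletOf
  cases restrict T {a, b, c} <;> simp [OptIso]

theorem not_isTripletOf_leaf (x : α) : ¬ IsTripletOf (leaf x) a b c := by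
  rw [isTripletOf_iff]
  rintro ⟨w, hw, hiso⟩
  simp only [restrict] at hw
  split_ifs at hw
  cases hw
  cases hiso

theorem IsTripletOf.subset_labels (h : IsTripletOf T a b c) : {a, b, c} ⊆ labels T := by
  obtain ⟨w, hw, hiso⟩ := isTripletOf_iff.mp h
  have hS : labels T ∩ {a, b, c} = {a, b, c} := by
    rw [← labels_eq_of_restrict_eq_some hw, hiso.labels_eq]
    ext; simp [tripletTree, labels]
  exact hS ▸ Finset.inter_subset_left

theorem IsTripletOf.comm (h : IsTripletOf T a b c) : IsTripletOf T b a c := by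
  obtain ⟨w, hw, hiso⟩ := isTripletOf_iff.mp h
  rw [isTripletOf_iff, Finset.insert_comm]
  exact ⟨w, hw, hiso.trans (.node (iso_node_comm _ _) (.leaf c))⟩

theorem IsTripletOf.eq_of_isTripletOf (h₁ : IsTripletOf T a b c) (h₂ : IsTripletOf T a c b) :
    b = c := by
  obtain ⟨w, hw, hiso⟩ := isTripletOf_iff.mp h₁
  obtain ⟨w', hw', hiso'⟩ := isTripletOf_iff.mp h₂
  rw [Finset.pair_comm, hw, Option.some.injEq] at hw'
  subst hw'
  have := hiso.symm.trans hiso'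
  unfold tripletTree at this
  rcases this with _ | ⟨_, hc⟩ | ⟨h, _⟩
  · cases hc; rfl
  · cases h

theorem isTripletOf_node_comm : IsTripletOf (node l r) a b c ↔ IsTripletOf (node r l) a b c := by
  unfold IsTripletOf
  simp only [restrict]
  rcases restrict l {a, b, c} with _ | wl <;> rcases restrict r {a, b, c} with _ | wr <;>
    simp only [OptIso]
  exact ⟨(iso_node_comm wr wl).trans, (iso_node_comm wl wr).trans⟩

theorem Good.swap (hg : Good (node l r)) : Good (node r l) :=
  ⟨hg.2.1, hg.1, hg.2.2.symm⟩

theorem IsTripletOf.node_left (hg : Good (node l r)) (h : IsTripletOf l a b c) :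
    IsTripletOf (node l r) a b c := by
  have hr : restrict r {a, b, c} = none :=
    restrict_eq_none_of_disjoint (hg.2.2.symm.mono_right h.subset_labels)
  unfold IsTripletOf at h ⊢
  rw [restrict, hr]
  cases hl : restrict l {a, b, c} <;> rw [hl] at h <;> exact h

theorem IsTripletOf.node_right (hg : Good (node l r)) (h : IsTripletOf r a b c) :
    IsTripletOf (node l r) a b c :=
  isTripletOf_node_comm.mpr (h.node_left hg.swap)

theorem isTripletOf_node_of_mem (hg : Good (node l r)) (ha : a ∈ labels l) (hb : b ∈ labels l)
    (hc : c ∈ labels r) (hab : a ≠ b) : IsTripletOf (node l r) a b c := by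
  obtain ⟨hgl, hgr, hdisj⟩ := hg
  rw [Finset.disjoint_left] at hdisj
  have hl : labels l ∩ {a, b, c} = {a, b} := by
    ext z; simp only [Finset.mem_inter, Finset.mem_insert, Finset.mem_singleton]; grind
  have hr : labels r ∩ {a, b, c} = {c} := by
    ext z; simp only [Finset.mem_inter, Finset.mem_insert, Finset.mem_singleton]; grind
  obtain ⟨wl, hwl, hlabl⟩ := exists_restrict_eq_some (hl ▸ Finset.insert_nonempty a {b})
  obtain ⟨wr, hwr, hlabr⟩ := exists_restrict_eq_some (hr ▸ Finset.singleton_nonempty c)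
  rw [isTripletOf_iff]
  refine ⟨node wl wr, by simp only [restrict, hwl, hwr],
    .node (iso_of_labels_eq_pair (hgl.restrict hwl) (hlabl.trans hl) hab) ?_⟩
  rw [eq_leaf_of_labels_eq_singleton (hgr.restrict hwr) (hlabr.trans hr)]
  exact .leaf c

theorem isTripletOf_node_of_mem_right (hg : Good (node l r)) (ha : a ∈ labels r)
    (hb : b ∈ labels r) (hc : c ∈ labels l) (hab : a ≠ b) : IsTripletOf (node l r) a b c :=
  isTripletOf_node_comm.mpr (isTripletOf_node_of_mem hg.swap ha hb hc hab)

theorem IsTripletOf.node_cases (hg : Good (node l r)) (h : IsTripletOf (node l r) a b c) :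
    IsTripletOf l a b c ∨ IsTripletOf r a b c ∨
      (a ∈ labels l ∧ b ∈ labels l ∧ c ∈ labels r ∧ a ≠ b) ∨
      (a ∈ labels r ∧ b ∈ labels r ∧ c ∈ labels l ∧ a ≠ b) := by
  have sub : ∀ {t w : LTree α}, restrict t {a, b, c} = some w → labels w ⊆ labels t := by
    intro t w hw
    rw [labels_eq_of_restrict_eq_some hw]
    exact Finset.inter_subset_left
  have cherry : ∀ {t w : LTree α}, Good t → restrict t {a, b, c} = some w →
      Iso w (node (leaf a) (leaf b)) → a ∈ labels t ∧ b ∈ labels t ∧ a ≠ b := by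
    intro t w ht hw hiso
    have hab := sub hw
    rw [hiso.labels_eq] at hab
    simp only [labels, Finset.union_subset_iff, Finset.singleton_subset_iff] at hab
    exact ⟨hab.1, hab.2, Finset.disjoint_singleton.mp (hiso.good (ht.restrict hw)).2.2⟩
  have leaf_c : ∀ {t w : LTree α}, restrict t {a, b, c} = some w → Iso w (leaf c) →
      c ∈ labels t := by
    intro t w hw hiso
    have hc := sub hw
    rw [hiso.labels_eq] at hc
    exact Finset.singleton_subset_iff.mp hc
  unfold IsTripletOf at h ⊢
  rw [restrict] at h
  rcases hl : restrict l {a, b, c} with _ | wl <;>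
    rcases hr : restrict r {a, b, c} with _ | wr <;> simp only [hl, hr] at h
  · exact h.elim
  · exact .inr (.inl h)
  · exact .inl h
  · unfold tripletTree at h
    rcases h with _ | ⟨h₁, h₂⟩ | ⟨h₁, h₂⟩
    · obtain ⟨ha, hb, hab⟩ := cherry hg.1 hl h₁
      exact .inr (.inr (.inl ⟨ha, hb, leaf_c hr h₂, hab⟩))
    · obtain ⟨ha, hb, hab⟩ := cherry hg.2.1 hr h₂
      exact .inr (.inr (.inr ⟨ha, hb, leaf_c hl h₁, hab⟩))

theorem isTripletOf_node_iff (hg : Good (node l r)) :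
    IsTripletOf (node l r) a b c ↔ IsTripletOf l a b c ∨ IsTripletOf r a b c ∨
      (a ∈ labels l ∧ b ∈ labels l ∧ c ∈ labels r ∧ a ≠ b) ∨
      (a ∈ labels r ∧ b ∈ labels r ∧ c ∈ labels l ∧ a ≠ b) := by
  refine ⟨IsTripletOf.node_cases hg, ?_⟩
  rintro (h | h | ⟨ha, hb, hc, hab⟩ | ⟨ha, hb, hc, hab⟩)
  · exact h.node_left hg
  · exact h.node_right hg
  · exact isTripletOf_node_of_mem hg ha hb hc hab
  · exact isTripletOf_node_of_mem_right hg ha hb hc hab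

theorem IsTripletOf.ne (hT : Good T) (h : IsTripletOf T a b c) : a ≠ b := by
  obtain ⟨w, hw, hiso⟩ := isTripletOf_iff.mp h
  exact Finset.disjoint_singleton.mp (hiso.good (hT.restrict hw)).1.2.2

theorem IsTripletOf.mem_labels (h : IsTripletOf T a b c) :
    a ∈ labels T ∧ b ∈ labels T ∧ c ∈ labels T := by
  simpa only [Finset.insert_subset_iff, Finset.singleton_subset_iff] using h.subset_labels

theorem exists_isTripletOf (hT : Good T) (ha : a ∈ labels T) (hb : b ∈ labels T)
    (hc : c ∈ labels T) (hab : a ≠ b) (hac : a ≠ c) (hbc : b ≠ c) :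
    IsTripletOf T a b c ∨ IsTripletOf T a c b ∨ IsTripletOf T b c a := by
  induction T with
  | leaf x =>
    simp only [labels, Finset.mem_singleton] at ha hb
    exact absurd (ha.trans hb.symm) hab
  | node l r ihl ihr =>
    simp only [labels, Finset.mem_union] at ha hb hc
    rcases ha with ha | ha <;> rcases hb with hb | hb <;> rcases hc with hc | hc
    · exact (ihl hT.1 ha hb hc).imp (·.node_left hT) (.imp (·.node_left hT) (·.node_left hT))
    · exact .inl (isTripletOf_node_of_mem hT ha hb hc hab)
    · exact .inr (.inl (isTripletOf_node_of_mem hT ha hc hb hac))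
    · exact .inr (.inr (isTripletOf_node_of_mem_right hT hb hc ha hbc))
    · exact .inr (.inr (isTripletOf_node_of_mem hT hb hc ha hbc))
    · exact .inr (.inl (isTripletOf_node_of_mem_right hT ha hc hb hac))
    · exact .inl (isTripletOf_node_of_mem_right hT ha hb hc hab)
    · exact (ihr hT.2.1 ha hb hc).imp (·.node_right hT)
        (.imp (·.node_right hT) (·.node_right hT))

theorem IsTripletOf.trans_outgroup {d : α} (hT : Good T) (h₁ : IsTripletOf T a b c)
    (h₂ : IsTripletOf T c d b) : IsTripletOf T a b d := by
  induction T with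
  | leaf x => exact absurd h₁ (not_isTripletOf_leaf x)
  | node l r ihl ihr =>
    have hdisj := Finset.disjoint_left.mp hT.2.2
    have hab := h₁.ne hT
    rw [isTripletOf_node_iff hT] at h₁ h₂ ⊢
    rcases h₁ with h₁ | h₁ | ⟨ha, hb, hc, -⟩ | ⟨ha, hb, hc, -⟩ <;>
      rcases h₂ with h₂ | h₂ | ⟨hc', hd, hb', -⟩ | ⟨hc', hd, hb', -⟩
    -- Apart from the two inductive cases, either `b` or `c` would lie on both sides, or `cd|b`
    -- separates `d` from `a` and `b`, which gives `ab|d` at once.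
    all_goals first
      | exact .inl (ihl hT.1 h₁ h₂)
      | exact .inr (.inl (ihr hT.2.1 h₁ h₂))
      | (try obtain ⟨ha, hb, hc⟩ := h₁.mem_labels
         try obtain ⟨hc', hd, hb'⟩ := h₂.mem_labels
         first
          | exact .inr (.inr (.inl ⟨ha, hb, hd, hab⟩))
          | exact .inr (.inr (.inr ⟨ha, hb, hd, hab⟩))
          | exact absurd hb' (hdisj hb)
          | exact absurd hb (hdisj hb')
          | exact absurd hc' (hdisj hc)
          | exact absurd hc (hdisj hc'))

end Triplet

end LTree

def NoForbiddenQuartet {α : Type u} (𝒳 : Finset α) (R : α → α → α → Prop) : Prop :=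
  ∀ a b c d : α, a ∈ 𝒳 → b ∈ 𝒳 → c ∈ 𝒳 → d ∈ 𝒳 →
    a ≠ b → a ≠ c → a ≠ d → b ≠ c → b ≠ d → c ≠ d →
    ¬(R a b c ∧ R c d b ∧ R b d a) ∧ ¬(R a b c ∧ R c d b ∧ R a d b)

namespace FullTriplets

variable {α : Type u} [DecidableEq α] {𝒳 : Finset α} {R : α → α → α → Prop} {a b c d : α}

theorem symm (hR : FullTriplets 𝒳 R) (h : R a b c) : R b a c := (hR.1 a b c).mp h

theorem mem_ne (hR : FullTriplets 𝒳 R) (h : R a b c) :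
    a ∈ 𝒳 ∧ b ∈ 𝒳 ∧ c ∈ 𝒳 ∧ a ≠ b ∧ a ≠ c ∧ b ≠ c :=
  hR.2.1 a b c h

theorem trichotomy (hR : FullTriplets 𝒳 R) (ha : a ∈ 𝒳) (hb : b ∈ 𝒳) (hc : c ∈ 𝒳)
    (hab : a ≠ b) (hac : a ≠ c) (hbc : b ≠ c) : R a b c ∨ R a c b ∨ R b c a := by
  rcases hR.2.2 a b c ha hb hc hab hac hbc with ⟨h, -⟩ | ⟨-, h, -⟩ | ⟨-, -, h⟩
  exacts [.inl h, .inr (.inl h), .inr (.inr h)]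

theorem not_swap (hR : FullTriplets 𝒳 R) (h : R a b c) : ¬ R a c b := by
  obtain ⟨ha, hb, hc, hab, hac, hbc⟩ := hR.mem_ne h
  rcases hR.2.2 a b c ha hb hc hab hac hbc with ⟨-, h', -⟩ | ⟨h', -⟩ | ⟨h', -⟩
  exacts [h', (h' h).elim, (h' h).elim]

theorem not_rotate (hR : FullTriplets 𝒳 R) (h : R a b c) : ¬ R b c a := hR.not_swap (hR.symm h)

theorem trans_outgroup (hR : FullTriplets 𝒳 R) (hF : NoForbiddenQuartet 𝒳 R)
    (had : a ≠ d) (h₁ : R a b c) (h₂ : R c d b) : R a b d := by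
  obtain ⟨ha, hb, hc, hab, hac, hbc⟩ := hR.mem_ne h₁
  obtain ⟨-, hd, -, hcd, -, hdb⟩ := hR.mem_ne h₂
  have hF' := hF a b c d ha hb hc hd hab hac had hbc hdb.symm hcd
  rcases hR.trichotomy ha hb hd hab had hdb.symm with h | h | h
  exacts [h, (hF'.2 ⟨h₁, h₂, h⟩).elim, (hF'.1 ⟨h₁, h₂, h⟩).elim]

theorem trans (hR : FullTriplets 𝒳 R) (hF : NoForbiddenQuartet 𝒳 R) (hac : a ≠ c)
    (h₁ : R a b d) (h₂ : R b c d) : R a c d := by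
  obtain ⟨ha, -, hd, hab, had, -⟩ := hR.mem_ne h₁
  obtain ⟨-, hc, -, hbc, -, hcd⟩ := hR.mem_ne h₂
  rcases hR.trichotomy ha hc hd hac had hcd with h | h | h
  · exact h
  · exact (hR.not_swap h₁ (hR.trans_outgroup hF hab h (hR.symm h₂))).elim
  · exact (hR.not_swap (hR.symm h₂) (hR.trans_outgroup hF hbc.symm h h₁)).elim

theorem of_outgroup_of_outgroup (hR : FullTriplets 𝒳 R) (hF : NoForbiddenQuartet 𝒳 R)
    (h₁ : R a b c) (h₂ : R a c d) (h₃ : R b c d) : R a b d := by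
  obtain ⟨ha, hb, -, hab, hac, hbc⟩ := hR.mem_ne h₁
  obtain ⟨-, -, hd, -, had, -⟩ := hR.mem_ne h₂
  obtain ⟨-, -, -, -, hbd, -⟩ := hR.mem_ne h₃
  rcases hR.trichotomy ha hb hd hab had hbd with h | h | h
  · exact h
  · exact (hR.not_swap h₂ (hR.trans_outgroup hF hac h h₃)).elim
  · exact (hR.not_swap h₃ (hR.trans_outgroup hF hbc h h₂)).elim

end FullTriplets

def Outgroup {α : Type u} (R : α → α → α → Prop) (L M : Finset α) : Prop :=
  ∀ a ∈ L, ∀ b ∈ L, a ≠ b → ∀ c ∈ M, R a b c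

namespace Outgroup

variable {α : Type u} {R : α → α → α → Prop} {L M : Finset α}

theorem singleton_left (R : α → α → α → Prop) (x : α) (M : Finset α) :
    Outgroup R {x} M := by
  intro a ha b hb hab
  rw [Finset.mem_singleton] at ha hb
  exact absurd (ha.trans hb.symm) hab

variable [DecidableEq α] {𝒳 : Finset α} {x : α}

theorem union_right {M' : Finset α} (h : Outgroup R L M) (h' : Outgroup R L M') :
    Outgroup R L (M ∪ M') := fun a ha b hb hab c hc =>
  (Finset.mem_union.mp hc).elim (h a ha b hb hab c) (h' a ha b hb hab c)

theorem insert_left (hR : FullTriplets 𝒳 R) (h : Outgroup R L M)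
    (hx : ∀ p ∈ L, ∀ q ∈ M, R p x q) : Outgroup R (insert x L) M := by
  intro a ha b hb hab c hc
  rcases Finset.mem_insert.mp ha with rfl | haL <;>
    rcases Finset.mem_insert.mp hb with rfl | hbL
  · exact absurd rfl hab
  · exact hR.symm (hx b hbL c hc)
  · exact hx a haL c hc
  · exact h a haL b hbL hab c hc

theorem insert_right (h : Outgroup R M L) (hx : Outgroup R M {x}) :
    Outgroup R M (insert x L) := by
  rw [Finset.insert_eq]
  exact hx.union_right h

end Outgroup

namespace FullTriplets

variable {α : Type u} [DecidableEq α] {𝒳 : Finset α} {R : α → α → α → Prop} {L M : Finset α}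
  {x : α}

theorem forall_of_exists (hR : FullTriplets 𝒳 R) (hF : NoForbiddenQuartet 𝒳 R)
    (hLM : Outgroup R L M) (hML : Outgroup R M L) (hxL : x ∉ L) (hxM : x ∉ M)
    (h : ∃ a ∈ L, ∃ b ∈ M, R a x b) : ∀ p ∈ L, ∀ q ∈ M, R p x q := by
  obtain ⟨a₀, ha₀, b₀, hb₀, h⟩ := h
  have to_b₀ : ∀ p ∈ L, R p x b₀ := fun p hp => by
    by_cases hpa : p = a₀
    · exact hpa ▸ h
    · exact hR.trans hF (ne_of_mem_of_not_mem hp hxL) (hLM p hp a₀ ha₀ hpa b₀ hb₀) h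
  intro p hp q hq
  by_cases hqb : q = b₀
  · exact hqb ▸ to_b₀ p hp
  · have hqb₀p := hML q hq b₀ hb₀ hqb p hp
    obtain ⟨-, -, -, -, hqp, -⟩ := hR.mem_ne hqb₀p
    have hqb₀x := hR.trans_outgroup hF (ne_of_mem_of_not_mem hq hxM) hqb₀p (to_b₀ p hp)
    exact hR.trans_outgroup hF hqp.symm (to_b₀ p hp) (hR.symm hqb₀x)

theorem outgroup_of_forall (hR : FullTriplets 𝒳 R) (hF : NoForbiddenQuartet 𝒳 R)
    (hML : Outgroup R M L) (hxM : x ∉ M) (hL : L.Nonempty)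
    (h : ∀ p ∈ L, ∀ q ∈ M, R p x q) : Outgroup R M {x} := by
  obtain ⟨a₀, ha₀⟩ := hL
  intro p hp q hq hpq y hy
  rw [Finset.mem_singleton.mp hy]
  exact hR.trans_outgroup hF (ne_of_mem_of_not_mem hp hxM) (hML p hp q hq hpq a₀ ha₀)
    (h a₀ ha₀ q hq)

theorem outgroup_of_cross (hR : FullTriplets 𝒳 R) (hF : NoForbiddenQuartet 𝒳 R)
    (hLM : Outgroup R L M) (hM : M.Nonempty) (h : ∀ p ∈ L, ∀ q ∈ M, R p q x) :
    Outgroup R L {x} := by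
  obtain ⟨w, hw⟩ := hM
  intro p hp q hq hpq y hy
  rw [Finset.mem_singleton.mp hy]
  exact hR.of_outgroup_of_outgroup hF (hLM p hp q hq hpq w hw) (h p hp w hw) (h q hq w hw)

theorem outgroup_union_of_not_exists (hR : FullTriplets 𝒳 R) (hF : NoForbiddenQuartet 𝒳 R)
    (hLM : Outgroup R L M) (hML : Outgroup R M L) (hL𝒳 : L ⊆ 𝒳) (hM𝒳 : M ⊆ 𝒳)
    (hdisj : Disjoint L M) (hx : x ∈ 𝒳) (hxL : x ∉ L) (hxM : x ∉ M)
    (hL : L.Nonempty) (hM : M.Nonempty)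
    (h₁ : ¬ ∃ a ∈ L, ∃ b ∈ M, R a x b) (h₂ : ¬ ∃ a ∈ L, ∃ b ∈ M, R b x a) :
    Outgroup R (L ∪ M) {x} := by
  have cross : ∀ p ∈ L, ∀ q ∈ M, R p q x := fun p hp q hq => by
    rcases hR.trichotomy (hL𝒳 hp) (hM𝒳 hq) hx
      (ne_of_mem_of_not_mem hq (Finset.disjoint_left.mp hdisj hp)).symm
      (ne_of_mem_of_not_mem hp hxL) (ne_of_mem_of_not_mem hq hxM) with h | h | h
    · exact h
    · exact absurd ⟨p, hp, q, hq, h⟩ h₁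
    · exact absurd ⟨p, hp, q, hq, h⟩ h₂
  have hLx := hR.outgroup_of_cross hF hLM hM cross
  have hMx := hR.outgroup_of_cross hF hML hL fun q hq p hp => hR.symm (cross p hp q hq)
  intro p hp q hq hpq y hy
  rcases Finset.mem_union.mp hp with hp | hp <;> rcases Finset.mem_union.mp hq with hq | hq
  · exact hLx p hp q hq hpq y hy
  · exact Finset.mem_singleton.mp hy ▸ cross p hp q hq
  · exact Finset.mem_singleton.mp hy ▸ hR.symm (cross q hq p hp)
  · exact hMx p hp q hq hpq y hy

end FullTriplets

namespace LTree

variable {α : Type u} [DecidableEq α] {𝒳 : Finset α} {R : α → α → α → Prop} {l r : LTree α}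
  {x : α}

/-- `tr(T) ⊆ ℛ`. -/
def TrSubset (T : LTree α) (R : α → α → α → Prop) : Prop :=
  ∀ a b c, IsTripletOf T a b c → R a b c

theorem trSubset_leaf (a : α) (R : α → α → α → Prop) : TrSubset (leaf a) R :=
  fun _ _ _ h => absurd h (not_isTripletOf_leaf a)

theorem trSubset_node_iff (hg : Good (node l r)) :
    TrSubset (node l r) R ↔ TrSubset l R ∧ TrSubset r R ∧
      Outgroup R (labels l) (labels r) ∧ Outgroup R (labels r) (labels l) := by
  refine ⟨fun h => ⟨fun a b c habc => h a b c (habc.node_left hg),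
    fun a b c habc => h a b c (habc.node_right hg),
    fun a ha b hb hab c hc => h a b c (isTripletOf_node_of_mem hg ha hb hc hab),
    fun a ha b hb hab c hc =>
      h a b c (isTripletOf_node_of_mem_right hg ha hb hc hab)⟩, ?_⟩
  rintro ⟨hl, hr, hlr, hrl⟩ a b c habc
  rcases habc.node_cases hg with h | h | ⟨ha, hb, hc, hab⟩ | ⟨ha, hb, hc, hab⟩
  exacts [hl a b c h, hr a b c h, hlr a ha b hb hab c hc, hrl a ha b hb hab c hc]

theorem trSubset_node_comm : TrSubset (node l r) R ↔ TrSubset (node r l) R :=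
  forall₃_congr fun _ _ _ => imp_congr_left isTripletOf_node_comm

open Classical in
noncomputable def insertLeaf (R : α → α → α → Prop) (x : α) : LTree α → LTree α
  | .leaf a => node (leaf x) (leaf a)
  | .node l r =>
    if ∃ p ∈ labels l, ∃ q ∈ labels r, R p x q then node (insertLeaf R x l) r
    else if ∃ p ∈ labels l, ∃ q ∈ labels r, R q x p then node l (insertLeaf R x r)
    else node (leaf x) (node l r)

theorem labels_insertLeaf (R : α → α → α → Prop) (x : α) (T : LTree α) :
    labels (insertLeaf R x T) = insert x (labels T) := by
  induction T with
  | leaf a => rfl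
  | node l r ihl ihr =>
    rw [insertLeaf]
    split_ifs
    · simp only [labels, ihl, Finset.insert_union]
    · simp only [labels, ihr, Finset.union_insert]
    · simp only [labels, Finset.insert_eq]

theorem Good.insertLeaf {T : LTree α} (hT : Good T) (hx : x ∉ labels T) :
    Good (insertLeaf R x T) := by
  induction T with
  | leaf a =>
    exact ⟨trivial, trivial,
      Finset.disjoint_singleton.mpr fun h => hx (h ▸ Finset.mem_singleton_self x)⟩
  | node l r ihl ihr =>
    obtain ⟨hgl, hgr, hdisj⟩ := hT
    simp only [labels, Finset.mem_union, not_or] at hx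
    rw [LTree.insertLeaf]
    split_ifs
    · exact ⟨ihl hgl hx.1, hgr,
        labels_insertLeaf R x l ▸ Finset.disjoint_insert_left.mpr ⟨hx.2, hdisj⟩⟩
    · exact ⟨hgl, ihr hgr hx.2,
        labels_insertLeaf R x r ▸ Finset.disjoint_insert_right.mpr ⟨hx.1, hdisj⟩⟩
    · exact ⟨trivial, ⟨hgl, hgr, hdisj⟩,
        Finset.disjoint_singleton_left.mpr (by simp [labels, hx])⟩

theorem trSubset_node_of_insert_left (hR : FullTriplets 𝒳 R) (hF : NoForbiddenQuartet 𝒳 R)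
    (hg : Good (node l r)) (hu : TrSubset (node l r) R) (hxl : x ∉ labels l)
    (hxr : x ∉ labels r) (h : ∃ p ∈ labels l, ∃ q ∈ labels r, R p x q) {l' : LTree α}
    (hg' : Good (node l' r))
    (hl' : labels l' = insert x (labels l)) (hl'R : TrSubset l' R) :
    TrSubset (node l' r) R := by
  obtain ⟨-, hrR, hlr, hrl⟩ := (trSubset_node_iff hg).mp hu
  have hcross := hR.forall_of_exists hF hlr hrl hxl hxr h
  refine (trSubset_node_iff hg').mpr ⟨hl'R, hrR, hl' ▸ hlr.insert_left hR hcross,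
    hl' ▸ hrl.insert_right (hR.outgroup_of_forall hF hrl hxr (labels_nonempty l) hcross)⟩

theorem TrSubset.insertLeaf (hR : FullTriplets 𝒳 R) (hF : NoForbiddenQuartet 𝒳 R)
    (hx : x ∈ 𝒳) {T : LTree α} (hT : Good T) (hT𝒳 : labels T ⊆ 𝒳) (hxT : x ∉ labels T)
    (h : TrSubset T R) :
    TrSubset (insertLeaf R x T) R := by
  induction T with
  | leaf a =>
    exact (trSubset_node_iff (hT.insertLeaf (R := R) hxT)).mpr ⟨trSubset_leaf x R,
      trSubset_leaf a R, Outgroup.singleton_left R x _, Outgroup.singleton_left R a _⟩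
  | node l r ihl ihr =>
    have hg' := hT.insertLeaf (R := R) hxT
    obtain ⟨hgl, hgr, hdisj⟩ := hT
    simp only [labels, Finset.mem_union, not_or, Finset.union_subset_iff] at hxT hT𝒳
    obtain ⟨hlR, hrR, hlr, hrl⟩ := (trSubset_node_iff ⟨hgl, hgr, hdisj⟩).mp h
    rw [LTree.insertLeaf] at hg' ⊢
    split_ifs at hg' ⊢ with h₁ h₂
    · exact trSubset_node_of_insert_left hR hF ⟨hgl, hgr, hdisj⟩ h hxT.1 hxT.2 h₁ hg'
        (labels_insertLeaf R x l) (ihl hgl hT𝒳.1 hxT.1 hlR)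
    · obtain ⟨p, hp, q, hq, hqp⟩ := h₂
      rw [trSubset_node_comm] at h ⊢
      exact trSubset_node_of_insert_left hR hF ⟨hgr, hgl, hdisj.symm⟩ h hxT.2 hxT.1
        ⟨q, hq, p, hp, hqp⟩ hg'.swap (labels_insertLeaf R x r) (ihr hgr hT𝒳.2 hxT.2 hrR)
    · exact (trSubset_node_iff hg').mpr ⟨trSubset_leaf x R, h, Outgroup.singleton_left R x _,
        hR.outgroup_union_of_not_exists hF hlr hrl hT𝒳.1 hT𝒳.2 hdisj hx hxT.1 hxT.2
          (labels_nonempty l) (labels_nonempty r) h₁ h₂⟩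

end LTree

open LTree

theorem TripletsCompatible.noForbiddenQuartet {α : Type u} [DecidableEq α] {𝒳 : Finset α}
    {R : α → α → α → Prop} (h : TripletsCompatible 𝒳 R) : NoForbiddenQuartet 𝒳 R := by
  obtain ⟨T, ⟨hT, -⟩, hRT⟩ := h
  intro a b c d _ _ _ _ _ _ had _ hbd _
  refine ⟨fun ⟨h₁, h₂, h₃⟩ => had ?_, fun ⟨h₁, h₂, h₃⟩ => hbd ?_⟩
  all_goals have habd := (hRT _ _ _ h₁).trans_outgroup hT (hRT _ _ _ h₂)
  · exact habd.comm.eq_of_isTripletOf (hRT _ _ _ h₃)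
  · exact habd.eq_of_isTripletOf (hRT _ _ _ h₃)

namespace FullTriplets

variable {α : Type u} [DecidableEq α] {𝒳 : Finset α} {R : α → α → α → Prop}

theorem exists_isTreeOn_trSubset (hR : FullTriplets 𝒳 R) (hF : NoForbiddenQuartet 𝒳 R)
    {S : Finset α} (hS : S ⊆ 𝒳) (hne : S.Nonempty) : ∃ T, IsTreeOn T S ∧ TrSubset T R := by
  induction hne using Finset.Nonempty.cons_induction with
  | singleton a => exact ⟨leaf a, ⟨trivial, rfl⟩, trSubset_leaf a R⟩
  | cons x s hxs _ ih =>
    rw [Finset.cons_eq_insert] at hS ⊢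
    obtain ⟨hx, hs𝒳⟩ := Finset.insert_subset_iff.mp hS
    obtain ⟨T, ⟨hT, rfl⟩, hTR⟩ := ih hs𝒳
    exact ⟨insertLeaf R x T, ⟨hT.insertLeaf hxs, labels_insertLeaf R x T⟩,
      hTR.insertLeaf hR hF hx hT hs𝒳 hxs⟩

theorem tripletsCompatible_of_noForbiddenQuartet (hR : FullTriplets 𝒳 R)
    (hF : NoForbiddenQuartet 𝒳 R) (hne : 𝒳.Nonempty) : TripletsCompatible 𝒳 R := by
  obtain ⟨T, ⟨hT, hT𝒳⟩, hTR⟩ := hR.exists_isTreeOn_trSubset hF subset_rfl hne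
  refine ⟨T, ⟨hT, hT𝒳⟩, fun a b c habc => ?_⟩
  obtain ⟨ha, hb, hc, hab, hac, hbc⟩ := hR.mem_ne habc
  rw [← hT𝒳] at ha hb hc
  rcases exists_isTripletOf hT ha hb hc hab hac hbc with h | h | h
  · exact h
  · exact absurd (hTR a c b h) (hR.not_swap habc)
  · exact absurd (hTR b c a h) (hR.not_rotate habc)

end FullTriplets

/-- Guillemot–Mnich.  A full set of triplets `ℛ` on `𝒳` is
compatible iff for every four labels `{a,b,c,d} ⊆ 𝒳` it contains neither
`{ab|c, cd|b, bd|a}` nor `{ab|c, cd|b, ad|b}`. -/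
theorem full_triplets_compatible_iff {α : Type u} [DecidableEq α]
    (𝒳 : Finset α) (hNe : 𝒳.Nonempty) (R : α → α → α → Prop)
    (hFull : FullTriplets 𝒳 R) :
    TripletsCompatible 𝒳 R ↔
      ∀ a b c d : α, a ∈ 𝒳 → b ∈ 𝒳 → c ∈ 𝒳 → d ∈ 𝒳 →
        a ≠ b → a ≠ c → a ≠ d → b ≠ c → b ≠ d → c ≠ d →
        ¬(R a b c ∧ R c d b ∧ R b d a) ∧ ¬(R a b c ∧ R c d b ∧ R a d b) :=
  ⟨TripletsCompatible.noForbiddenQuartet,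
    fun hF => hFull.tripletsCompatible_of_noForbiddenQuartet hF hNe⟩
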